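/- arXiv:1705.09094 — 5 statements merged into one kernel-verified Lean document; each statement's English description precedes it below -/
import Mathlib

section
/- Let ω : ℝ → ℝ be smooth with |ω'(k)| ≤ c, and let φ₁, φ₂ be smooth compactly supported complex functions. Define for d > 0 and t ∈ ℝ with d = (x − y) − c(t − t') > 0 the commutator integral I = ∫ e^{ik(x−y) − iω(k)(t−t')} φ₁(k) conj(φ₂(k)) dk. Then writing ω̃(k) = ω(k) − ck, I = ∫ e^{ikd − iω̃(k)(t−t')} φ₁(k) conj(φ₂(k)) dk, and for each n, |I| ≤ C_n(t−t') / d^n for some constant C_n depending on n, φ₁, φ₂, ω, and t−t'. -/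
open ComplexConjugate
open scoped FourierTransform Real

/-- Free-field approximate causality: with bounded group velocity `|ω'| ≤ c` and
smooth compactly supported envelopes, the commutator integral
`I = ∫ e^{ik(x−y) − iω(k)(t−t')} φ₁(k) conj(φ₂(k)) dk` can be rewritten with
`ω̃(k) = ω(k) − ck` and the distance `d = (x−y) − c(t−t')`, and for each `n`
there is a constant `C_n` (depending on `n, φ₁, φ₂, ω, t−t'`) with `|I| ≤ C_n / dⁿ`
whenever `d > 0`. -/
theorem stmt6 (ω : ℝ → ℝ) (hω : ContDiff ℝ (⊤ : ℕ∞) ω) (c : ℝ) (hc : ∀ k, |deriv ω k| ≤ c)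
    (φ₁ φ₂ : ℝ → ℂ) (hφ₁ : ContDiff ℝ (⊤ : ℕ∞) φ₁) (hφ₂ : ContDiff ℝ (⊤ : ℕ∞) φ₂)
    (hs₁ : HasCompactSupport φ₁) (hs₂ : HasCompactSupport φ₂) (t t' : ℝ) :
    (∀ x y : ℝ,
      (∫ k : ℝ, Complex.exp (Complex.I * (k * (x - y)) - Complex.I * (ω k * (t - t'))) *
          (φ₁ k * conj (φ₂ k))) =
        ∫ k : ℝ, Complex.exp (Complex.I * (k * ((x - y) - c * (t - t'))) -
          Complex.I * ((ω k - c * k) * (t - t'))) * (φ₁ k * conj (φ₂ k))) ∧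
      ∀ n : ℕ, ∃ C : ℝ, ∀ x y : ℝ, 0 < (x - y) - c * (t - t') →
        ‖∫ k : ℝ, Complex.exp (Complex.I * (k * (x - y)) - Complex.I * (ω k * (t - t'))) *
            (φ₁ k * conj (φ₂ k))‖ ≤ C / ((x - y) - c * (t - t')) ^ n := by
  constructor
  · intro x y
    refine MeasureTheory.integral_congr_ae (Filter.Eventually.of_forall fun k => ?_)
    simp only
    congr 1
    push_cast
    ring
  · intro n
    -- the (x,y)-independent part of the integrand
    set g : ℝ → ℂ := fun k =>
      Complex.exp (-(Complex.I * ((ω k - c * k) * (t - t')))) * (φ₁ k * conj (φ₂ k)) with hg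
    have hsub : ContDiff ℝ (⊤ : ℕ∞) (fun k : ℝ => ((ω k - c * k : ℝ) : ℂ)) := by
      exact Complex.ofRealCLM.contDiff.comp ((hω.sub (contDiff_const.mul contDiff_id)))
    have hgsmooth : ContDiff ℝ (⊤ : ℕ∞) g := by
      apply ContDiff.mul
      · apply Complex.contDiff_exp.comp
        apply ContDiff.neg
        apply ContDiff.mul contDiff_const
        apply ContDiff.mul _ contDiff_const
        have : (fun k : ℝ => ((ω k : ℂ) - (c : ℂ) * (k : ℂ))) =
            fun k : ℝ => ((ω k - c * k : ℝ) : ℂ) := by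
          ext k; push_cast; ring
        rw [this]
        exact hsub
      · exact hφ₁.mul (Complex.conjCLE.contDiff.comp hφ₂)
    have hgsupp : HasCompactSupport g := by
      apply HasCompactSupport.mul_left
      exact HasCompactSupport.mul_right hs₁
    have hder : ∀ m : ℕ, HasCompactSupport (iteratedDeriv m g) := by
      intro m
      have : iteratedDeriv m g = (fun L : ℝ[×m]→L[ℝ] ℂ => L fun _ => 1) ∘
          (iteratedFDeriv ℝ m g) := by
        ext x; simp [iteratedDeriv_eq_iteratedFDeriv]
      rw [this]
      exact HasCompactSupport.comp_left (hgsupp.iteratedFDeriv m) (by simp)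
    have hint : ∀ m : ℕ, (m : ℕ∞) ≤ (⊤ : ℕ∞) → MeasureTheory.Integrable (iteratedDeriv m g) := by
      intro m _
      exact ((hgsmooth.continuous_iteratedDeriv m (by exact_mod_cast le_top)).integrable_of_hasCompactSupport (hder m))
    have key := Real.fourier_iteratedDeriv (N := (⊤ : ℕ∞)) (n := n)
      (hgsmooth.of_le (by simp)) hint le_top
    refine ⟨∫ k, ‖iteratedDeriv n g k‖, fun x y hd => ?_⟩
    set d : ℝ := (x - y) - c * (t - t') with hdd
    -- rewrite the integral as a Fourier integral of g
    have hI : (∫ k : ℝ, Complex.exp (Complex.I * (k * (x - y)) - Complex.I * (ω k * (t - t'))) *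
        (φ₁ k * conj (φ₂ k))) = 𝓕 g (-(d / (2 * π))) := by
      rw [Real.fourier_eq]
      refine MeasureTheory.integral_congr_ae (Filter.Eventually.of_forall fun k => ?_)
      simp only [Circle.smul_def, Real.fourierChar_apply, RCLike.inner_apply, conj_trivial,
        smul_eq_mul, hg]
      rw [mul_assoc]
      conv_rhs => rw [← mul_assoc, ← Complex.exp_add]
      congr 1
      rw [show 2 * (π * -(-(d / (2 * π)) * k)) = k * d from by field_simp <;> ring, hdd]
      push_cast
      ring
    rw [hI]
    -- use the iterated-derivative Fourier identity at w = -(d/(2π))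
    have hkey := congrFun key (-(d / (2 * π)))
    have hnorm : ‖𝓕 (iteratedDeriv n g) (-(d / (2 * π)))‖ =
        d ^ n * ‖𝓕 g (-(d / (2 * π)))‖ := by
      rw [hkey, norm_smul, norm_pow]
      congr 2
      have h1 : ‖2 * (π : ℂ) * Complex.I * ((-(d / (2 * π)) : ℝ) : ℂ)‖ =
          |2 * π * (d / (2 * π))| := by
        push_cast
        rw [show (2 : ℂ) * ↑π * Complex.I * -(↑d / (2 * ↑π)) =
          Complex.I * (((-(2 * π * (d / (2 * π))) : ℝ) : ℂ)) by push_cast; ring]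
        rw [norm_mul, Complex.norm_I, one_mul, Complex.norm_real, Real.norm_eq_abs, abs_neg]
      rw [h1, show 2 * π * (d / (2 * π)) = d by field_simp]
      exact abs_of_pos hd
    have hbound : ‖𝓕 (iteratedDeriv n g) (-(d / (2 * π)))‖ ≤ ∫ k, ‖iteratedDeriv n g k‖ :=
      VectorFourier.norm_fourierIntegral_le_integral_norm _ _ _ _ _
    rw [hnorm] at hbound
    rw [le_div_iff₀ (pow_pos hd n)]
    calc ‖𝓕 g (-(d / (2 * π)))‖ * d ^ n = d ^ n * ‖𝓕 g (-(d / (2 * π)))‖ := by ring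
      _ ≤ ∫ k, ‖iteratedDeriv n g k‖ := hbound
end

section
/- Let C : ℝ² → ℂ be an n-times continuously differentiable kernel and φ a smooth compactly supported function. Then N(x̄) = ∬ C(k,p) e^{i(k−p)x̄} φ(k)* φ(p) dk dp satisfies N(x̄) = O(|x̄|^{−n}) as |x̄| → ∞. -/
open Asymptotics Filter ComplexConjugate
open MeasureTheory Real
open scoped FourierTransform

noncomputable def Lc : (ℝ × ℝ) →L[ℝ] ℝ →L[ℝ] ℝ :=
  (ContinuousLinearMap.mul ℝ ℝ).comp
    ((2 * π)⁻¹ • (ContinuousLinearMap.snd ℝ ℝ ℝ - ContinuousLinearMap.fst ℝ ℝ ℝ))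

lemma Lc_apply (v : ℝ × ℝ) (x : ℝ) : Lc v x = (v.2 - v.1) / (2 * π) * x := by
  simp [Lc, div_eq_inv_mul]
  ring

set_option maxHeartbeats 1000000 in
/-- Polynomial decay of the two-point oscillatory integral: if `C` is `Cⁿ` on a
neighborhood of `supp φ × supp φ` with `φ` smooth and compactly supported, then
`N(x̄) = ∬ C(k,p) e^{i(k−p)x̄} φ(k)* φ(p) dk dp = O(|x̄|⁻ⁿ)` as `|x̄| → ∞`. -/
theorem stmt9 (n : ℕ) (φ : ℝ → ℂ) (hφ : ContDiff ℝ (⊤ : ℕ∞) φ) (hsupp : HasCompactSupport φ)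
    (C : ℝ × ℝ → ℂ)
    (hC : ∃ U : Set (ℝ × ℝ), IsOpen U ∧ (tsupport φ ×ˢ tsupport φ) ⊆ U ∧ ContDiffOn ℝ n C U) :
    (fun xbar : ℝ =>
        ∫ k : ℝ, ∫ p : ℝ,
          C (k, p) * Complex.exp (Complex.I * ((k - p) * xbar)) * conj (φ k) * φ p)
      =O[cocompact ℝ] fun xbar : ℝ => |xbar|⁻¹ ^ n := by
  obtain ⟨U, hUo, hSU, hCU⟩ := hC
  set Φ : ℝ × ℝ → ℂ := fun v => C v * conj (φ v.1) * φ v.2 with hΦdef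
  have hS : IsClosed (tsupport φ ×ˢ tsupport φ) :=
    (isClosed_tsupport φ).prod (isClosed_tsupport φ)
  have hzero : ∀ v : ℝ × ℝ, v ∉ tsupport φ ×ˢ tsupport φ → Φ v = 0 := by
    intro v hv
    rw [Set.mem_prod] at hv
    by_cases h1 : v.1 ∈ tsupport φ
    · have h2 : v.2 ∉ tsupport φ := fun h => hv ⟨h1, h⟩
      simp [hΦdef, image_eq_zero_of_notMem_tsupport h2]
    · simp [hΦdef, image_eq_zero_of_notMem_tsupport h1]
  have hΦc : HasCompactSupport Φ :=
    HasCompactSupport.intro (hsupp.prod hsupp) hzero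
  have hΦ : ContDiff ℝ n Φ := by
    rw [contDiff_iff_contDiffAt]
    intro v
    by_cases hv : v ∈ tsupport φ ×ˢ tsupport φ
    · have h1 : ContDiff ℝ n fun v : ℝ × ℝ => conj (φ v.1) :=
        Complex.conjCLE.contDiff.comp ((hφ.of_le (by exact_mod_cast le_top)).comp contDiff_fst)
      have h2 : ContDiff ℝ n fun v : ℝ × ℝ => φ v.2 :=
        (hφ.of_le (by exact_mod_cast le_top)).comp contDiff_snd
      exact ((hCU.mul h1.contDiffOn).mul h2.contDiffOn).contDiffAt (hUo.mem_nhds (hSU hv))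
    · have hev : Φ =ᶠ[nhds v] (fun _ => (0 : ℂ)) := by
        filter_upwards [hS.isOpen_compl.mem_nhds hv] with w hw using hzero w hw
      exact (contDiffAt_const (c := (0 : ℂ))).congr_of_eventuallyEq hev
  -- integrability of iterated derivatives
  have hint : ∀ (k m : ℕ), (k : ℕ∞) ≤ (0 : ℕ) → (m : ℕ∞) ≤ n →
      Integrable (fun v : ℝ × ℝ => ‖v‖ ^ k * ‖iteratedFDeriv ℝ m Φ v‖) volume := by
    intro k m hk hm
    have hk0 : k = 0 := by exact_mod_cast le_antisymm hk zero_le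
    subst hk0
    simp only [pow_zero, one_mul]
    exact ((hΦ.continuous_iteratedFDeriv (by exact_mod_cast hm)).norm).integrable_of_hasCompactSupport
      (hΦc.iteratedFDeriv m).norm
  set F : ℝ → ℂ := VectorFourier.fourierIntegral 𝐞 volume Lc.toLinearMap₁₂ Φ with hF
  -- the key bound
  set B : ℝ := π ^ n * (2 * π * ‖Lc‖) ^ 0 * (2 * (0:ℕ) + 2 : ℝ) ^ n *
      ∑ p ∈ Finset.range (0 + 1) ×ˢ Finset.range (n + 1),
        ∫ v : ℝ × ℝ, ‖v‖ ^ p.1 * ‖iteratedFDeriv ℝ p.2 Φ v‖ with hB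
  have key : ∀ x : ℝ, |x| ^ n * ‖F x‖ ≤ B := by
    intro x
    have := VectorFourier.pow_mul_norm_iteratedFDeriv_fourierIntegral_le (L := Lc)
      (K := (0 : ℕ∞)) (N := (n : ℕ∞)) hΦ hint le_rfl le_rfl ((-π, π) : ℝ × ℝ) x
    have hv : Lc ((-π, π) : ℝ × ℝ) x = x := by
      rw [Lc_apply]
      have : (π - -π) / (2 * π) = 1 := by
        field_simp
        ring
      rw [this, one_mul]
    have hnv : ‖((-π, π) : ℝ × ℝ)‖ = π := by
      simp [Prod.norm_def, abs_of_nonneg pi_nonneg, abs_of_nonpos (neg_nonpos.2 pi_nonneg)]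
    rw [hv, hnv, norm_iteratedFDeriv_zero] at this
    exact le_trans this (le_of_eq (by rw [hB]))
  -- identification of the integral with the Fourier integral
  have hEq : ∀ x : ℝ,
      (∫ k : ℝ, ∫ p : ℝ,
        C (k, p) * Complex.exp (Complex.I * ((k - p) * x)) * conj (φ k) * φ p) = F x := by
    intro x
    have hptwise : ∀ v : ℝ × ℝ,
        C v * Complex.exp (Complex.I * ((v.1 - v.2) * x)) * conj (φ v.1) * φ v.2
          = 𝐞 (-(Lc.toLinearMap₁₂ v x)) • Φ v := by
      intro v
      have hL : Lc.toLinearMap₁₂ v x = (v.2 - v.1) / (2 * π) * x := Lc_apply v x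
      rw [Circle.smul_def, Real.fourierChar_apply, hL]
      have harg : 2 * π * -((v.2 - v.1) / (2 * π) * x) = (v.1 - v.2) * x := by
        field_simp
        ring
      rw [harg, smul_eq_mul]
      have hexp : Complex.I * (((v.1 : ℂ) - (v.2 : ℂ)) * (x : ℂ))
          = (((v.1 - v.2) * x : ℝ) : ℂ) * Complex.I := by push_cast; ring
      rw [hexp]
      simp only [hΦdef]
      ring
    set G : ℝ × ℝ → ℂ := fun v =>
      C v * Complex.exp (Complex.I * ((v.1 - v.2) * x)) * conj (φ v.1) * φ v.2 with hGdef
    have hGeq : G = (fun v : ℝ × ℝ => Complex.exp (Complex.I * ((v.1 - v.2) * x))) * Φ := by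
      funext v
      simp only [hGdef, Pi.mul_apply, hΦdef]
      ring
    have hGint : Integrable G volume := by
      rw [hGeq]
      have hcont : Continuous fun v : ℝ × ℝ => Complex.exp (Complex.I * ((v.1 - v.2) * x)) :=
        Complex.continuous_exp.comp (by fun_prop)
      exact (hcont.mul hΦ.continuous).integrable_of_hasCompactSupport
        (HasCompactSupport.mul_left hΦc)
    calc (∫ k : ℝ, ∫ p : ℝ,
          C (k, p) * Complex.exp (Complex.I * ((k - p) * x)) * conj (φ k) * φ p)
        = ∫ v : ℝ × ℝ, G v ∂(volume.prod volume) :=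
          MeasureTheory.integral_integral (f := fun k p => G (k, p))
            (by rw [← MeasureTheory.Measure.volume_eq_prod]; exact hGint)
      _ = ∫ v : ℝ × ℝ, G v := by rw [← MeasureTheory.Measure.volume_eq_prod]
      _ = F x := by
          rw [hF, VectorFourier.fourierIntegral]
          exact MeasureTheory.integral_congr_ae (Filter.Eventually.of_forall hptwise)
  -- conclude
  rw [Asymptotics.isBigO_iff]
  refine ⟨B, ?_⟩
  have hcc : ∀ᶠ x : ℝ in cocompact ℝ, 1 ≤ |x| := by
    have : ∀ᶠ x : ℝ in cocompact ℝ, x ∉ Set.Icc (-1 : ℝ) 1 :=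
      (isCompact_Icc).compl_mem_cocompact
    filter_upwards [this] with x hx
    by_contra h
    exact hx ⟨by linarith [neg_abs_le x, abs_nonneg x, not_le.1 h], by linarith [le_abs_self x]⟩
  filter_upwards [hcc] with x hx
  rw [hEq x]
  have hxpos : (0 : ℝ) < |x| := lt_of_lt_of_le one_pos hx
  have h1 : ‖F x‖ ≤ B * (|x|⁻¹) ^ n := by
    rw [inv_pow, ← div_eq_mul_inv, le_div_iff₀ (pow_pos hxpos n)]
    calc ‖F x‖ * |x| ^ n = |x| ^ n * ‖F x‖ := by ring
      _ ≤ B := key x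
  calc ‖F x‖ ≤ B * (|x|⁻¹) ^ n := h1
    _ = B * ‖(|x|⁻¹) ^ n‖ := by
        rw [Real.norm_eq_abs, abs_of_nonneg (pow_nonneg (inv_nonneg.2 (abs_nonneg x)) n)]
end

section
/- The Fourier transform of the shifted Heaviside step function satisfies, in the sense of distributions, (1/√(2π)) ∫ e^{−iqy} θ(∓(y−y₀)) dy = ± (i/√(2π)) · e^{−iqy₀}/(q ± i0⁺), i.e., the tempered distribution y ↦ θ(y₀ − y) has Fourier transform i e^{−iqy₀} · lim_{ε→0⁺} 1/(q + iε) up to the normalization √(2π). -/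
open Filter
open MeasureTheory Set Complex
open scoped FourierTransform Topology

/-
For `ε > 0` the regularized kernel is itself a Fourier integral over the half-line,
`i e^{-iqy₀}/(q + iε) = ∫_{y ≤ y₀} e^{ε(y-y₀)} e^{-iqy} dy`.
Pairing with `g` and applying Fubini turns the left-hand side into
`∫_{y ≤ y₀} e^{ε(y-y₀)} ĝ(y) dy`, and since `ĝ` is integrable, dominated convergence
lets `ε → 0⁺`.
-/

theorem integral_Iic_exp_mul_exp_neg_I_mul {ε : ℝ} (hε : 0 < ε) (q y₀ : ℝ) :
    ∫ y in Iic y₀, cexp (ε * (y - y₀)) * cexp (-(I * q * y)) =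
      I * cexp (-(I * q * y₀)) / (q + I * ε) := by
  have hre : 0 < ((ε : ℂ) - I * q).re := by simpa using hε
  have hsplit : ∀ y : ℝ, cexp (ε * (y - y₀)) * cexp (-(I * q * y)) =
      cexp (-(ε * y₀)) * cexp ((ε - I * q) * y) := fun y => by
    rw [← Complex.exp_add, ← Complex.exp_add]; ring_nf
  have hI : q + I * ε = I * (ε - I * q) := by ring_nf; rw [I_sq]; ring
  simp_rw [hsplit]
  rw [integral_const_mul, integral_exp_mul_complex_Iic hre, ← mul_div_assoc, ← Complex.exp_add,
    hI, mul_div_mul_left _ _ I_ne_zero]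
  congr 2
  ring

theorem integral_mul_regularized_kernel_eq {g : ℝ → ℂ} (hg : Integrable g) {ε : ℝ} (hε : 0 < ε)
    (y₀ : ℝ) :
    ∫ q : ℝ, g q * (I * cexp (-(I * q * y₀)) / (q + I * ε)) =
      ∫ y in Iic y₀, cexp (ε * (y - y₀)) * ∫ q : ℝ, g q * cexp (-(I * q * y)) := by
  have hdamp : IntegrableOn (fun y : ℝ => cexp (ε * (y - y₀))) (Iic y₀) := by
    have := (integrableOn_exp_mul_complex_Iic (a := ε) (by simpa using hε) y₀).mul_const
      (cexp (-(ε * y₀)))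
    refine IntegrableOn.congr_fun this (fun y _ => ?_) measurableSet_Iic
    rw [← Complex.exp_add]; ring_nf
  have hF : Integrable (Function.uncurry fun (q y : ℝ) =>
      g q * (cexp (ε * (y - y₀)) * cexp (-(I * q * y))))
      ((volume : Measure ℝ).prod (volume.restrict (Iic y₀))) := by
    refine (hg.mul_prod hdamp).mono ?_ (Eventually.of_forall fun p => ?_)
    · refine hg.aestronglyMeasurable.comp_fst.mul (Continuous.aestronglyMeasurable ?_)
      fun_prop
    · simp [Function.uncurry, norm_exp]
  calc ∫ q : ℝ, g q * (I * cexp (-(I * q * y₀)) / (q + I * ε))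
      = ∫ q : ℝ, ∫ y in Iic y₀, g q * (cexp (ε * (y - y₀)) * cexp (-(I * q * y))) := by
        simp_rw [integral_const_mul, integral_Iic_exp_mul_exp_neg_I_mul hε]
    _ = ∫ y in Iic y₀, ∫ q : ℝ, g q * (cexp (ε * (y - y₀)) * cexp (-(I * q * y))) :=
        integral_integral_swap hF
    _ = ∫ y in Iic y₀, cexp (ε * (y - y₀)) * ∫ q : ℝ, g q * cexp (-(I * q * y)) := by
        simp_rw [mul_left_comm (g _), integral_const_mul]

theorem tendsto_integral_Iic_exp_mul {f : ℝ → ℂ} {y₀ : ℝ} (hf : IntegrableOn f (Iic y₀)) :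
    Tendsto (fun ε : ℝ => ∫ y in Iic y₀, cexp (ε * (y - y₀)) * f y) (𝓝[>] 0)
      (𝓝 (∫ y in Iic y₀, f y)) := by
  refine tendsto_integral_filter_of_dominated_convergence (fun y => ‖f y‖) ?_ ?_ hf.norm ?_
  · refine Eventually.of_forall fun ε => AEStronglyMeasurable.mul ?_ hf.aestronglyMeasurable
    exact Continuous.aestronglyMeasurable (by fun_prop)
  · filter_upwards [self_mem_nhdsWithin] with ε (hε : 0 < ε)
    refine (ae_restrict_iff' measurableSet_Iic).2 (Eventually.of_forall fun y hy => ?_)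
    have hdecay : ‖cexp (ε * (y - y₀))‖ ≤ 1 := by
      rw [← ofReal_sub, ← ofReal_mul, norm_exp_ofReal, Real.exp_le_one_iff]
      exact mul_nonpos_of_nonneg_of_nonpos hε.le (sub_nonpos.2 hy)
    simpa [norm_mul] using mul_le_mul_of_nonneg_right hdecay (norm_nonneg (f y))
  · refine Eventually.of_forall fun y => ?_
    have hcont : Continuous fun ε : ℝ => cexp (ε * (y - y₀)) * f y := by fun_prop
    simpa using (hcont.tendsto 0).mono_left nhdsWithin_le_nhds

theorem SchwartzMap.integrable_integral_mul_exp_neg_I_mul (g : SchwartzMap ℝ ℂ) :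
    Integrable fun y : ℝ => ∫ q : ℝ, g q * cexp (-(I * q * y)) := by
  -- Mathlib's `𝓕` uses the kernel `e^{-2πiqx}`, so the integral is `𝓕 g (y / 2π)`.
  have hG := (integrable_comp_mul_left_iff (𝓕 g : SchwartzMap ℝ ℂ)
    (inv_ne_zero Real.two_pi_pos.ne')).2 (𝓕 g).integrable
  refine hG.congr (Eventually.of_forall fun y => ?_)
  rw [SchwartzMap.fourier_coe]
  dsimp only
  rw [Real.fourier_real_eq_integral_exp_smul]
  refine integral_congr_ae (Eventually.of_forall fun q => ?_)
  simp only [smul_eq_mul]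
  rw [mul_comm]
  congr 2
  push_cast
  field_simp

/-- Distributional Fourier transform of the shifted Heaviside step function:
for every Schwartz test function `g` (with `ĝ(y) = ∫ g(q) e^{−iqy} dq`),
`∫ θ(y₀−y) ĝ(y) dy = lim_{ε→0⁺} ∫ g(q) · i e^{−iqy₀}/(q+iε) dq`. -/
theorem stmt10 (g : SchwartzMap ℝ ℂ) (y₀ : ℝ) :
    Tendsto
      (fun ε : ℝ => ∫ q : ℝ,
        g q * (Complex.I * Complex.exp (-(Complex.I * q * y₀)) / (q + Complex.I * ε)))
      (nhdsWithin 0 (Set.Ioi 0))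
      (nhds (∫ y in Set.Iic y₀, ∫ q : ℝ, g q * Complex.exp (-(Complex.I * q * y)))) := by
  refine (tendsto_integral_Iic_exp_mul
    g.integrable_integral_mul_exp_neg_I_mul.integrableOn).congr' ?_
  filter_upwards [self_mem_nhdsWithin] with ε hε
  exact (integral_mul_regularized_kernel_eq g.integrable hε y₀).symm
end

section
/- Sokhotski–Plemelj formula: for every Schwartz function g : ℝ → ℂ, lim_{ε→0⁺} ∫ g(k)/(k + iε) dk = −iπ g(0) + lim_{ε→0⁺} ∫_{|k|>ε} g(k)/k dk. -/
/-!
Write `g k = k * ψ k + g 0 * 𝟙_[-1,1] k`, where `ψ = plemeljRemainder g` is the difference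
quotient of `g` at `0` on `[-1, 1]` and `g k / k` outside; `ψ` is integrable. Against `1 / k`
the second term is odd, so it drops out of the principal value, which is therefore `∫ ψ`.
Against `1 / (k + iε)` the first term tends to `∫ ψ` by dominated convergence, as
`|k / (k + iε)| ≤ 1`, while `∫_{-1}^{1} dk / (k + iε) = log (1 + iε) - log (-1 + iε) → -iπ`:
the jump of the principal logarithm across the negative real axis.
-/

open Filter

open MeasureTheory Topology Set

theorem integral_eq_zero_of_odd {E : Type*} [NormedAddCommGroup E] [NormedSpace ℝ E]
    {f : ℝ → E} (hf : ∀ x, f (-x) = -f x) : ∫ x, f x = 0 := by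
  have h : (2 : ℝ) • ∫ x, f x = 0 := by
    rw [two_smul]
    nth_rewrite 1 [← integral_neg_eq_self f volume]
    simp_rw [hf, integral_neg, neg_add_cancel]
  exact (smul_eq_zero.1 h).resolve_left two_ne_zero

lemma ofReal_add_I_mul_ne_zero (k : ℝ) {ε : ℝ} (hε : ε ≠ 0) : (k : ℂ) + Complex.I * ε ≠ 0 := by
  intro h
  exact hε (by simpa using congrArg Complex.im h)

lemma norm_div_ofReal_add_I_mul_le_one (k ε : ℝ) :
    ‖(k : ℂ) / ((k : ℂ) + Complex.I * ε)‖ ≤ 1 := by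
  rw [norm_div, Complex.norm_real, Real.norm_eq_abs]
  refine div_le_one_of_le₀ ?_ (norm_nonneg _)
  simpa using Complex.abs_re_le_norm ((k : ℂ) + Complex.I * ε)

lemma tendsto_ofReal_add_I_mul (a : ℝ) :
    Tendsto (fun ε : ℝ => (a : ℂ) + Complex.I * ε) (𝓝[>] 0) (𝓝[{z | 0 ≤ z.im}] a) := by
  refine tendsto_nhdsWithin_iff.2 ⟨?_, ?_⟩
  · have h : Continuous (fun ε : ℝ => (a : ℂ) + Complex.I * ε) := by fun_prop
    simpa using h.tendsto 0 |>.mono_left nhdsWithin_le_nhds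
  · filter_upwards [self_mem_nhdsWithin] with ε hε
    simpa using le_of_lt hε

lemma integral_inv_ofReal_add_I_mul {ε : ℝ} (hε : ε ≠ 0) (a b : ℝ) :
    ∫ k in a..b, ((k : ℂ) + Complex.I * ε)⁻¹
      = Complex.log (b + Complex.I * ε) - Complex.log (a + Complex.I * ε) := by
  have hderiv : ∀ k : ℝ, HasDerivAt (fun x : ℝ => Complex.log ((x : ℂ) + Complex.I * ε))
      ((k : ℂ) + Complex.I * ε)⁻¹ k := by
    intro k
    have hslit : (k : ℂ) + Complex.I * ε ∈ Complex.slitPlane := Or.inr (by simpa using hε)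
    simpa [Function.comp_def] using ((Complex.hasDerivAt_log hslit).comp (k : ℂ)
      ((hasDerivAt_id (k : ℂ)).add_const (Complex.I * ε))).comp_ofReal
  refine intervalIntegral.integral_eq_sub_of_hasDerivAt (fun k _ => hderiv k) ?_
  refine (Continuous.inv₀ (by fun_prop) fun k => ?_).intervalIntegrable a b
  exact ofReal_add_I_mul_ne_zero k hε

lemma tendsto_integral_inv_ofReal_add_I_mul {r : ℝ} (hr : 0 < r) :
    Tendsto (fun ε : ℝ => ∫ k in -r..r, ((k : ℂ) + Complex.I * ε)⁻¹) (𝓝[>] 0)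
      (𝓝 (-(Real.pi * Complex.I))) := by
  have hright : Tendsto (fun ε : ℝ => Complex.log (r + Complex.I * ε)) (𝓝[>] 0)
      (𝓝 (Real.log r)) := by
    have hslit : (r : ℂ) ∈ Complex.slitPlane := Complex.ofReal_mem_slitPlane.2 hr
    simpa [Function.comp_def, Complex.ofReal_log hr.le] using (continuousAt_clog hslit).tendsto.comp
      ((tendsto_ofReal_add_I_mul r).mono_right nhdsWithin_le_nhds)
  have hleft : Tendsto (fun ε : ℝ => Complex.log ((-r : ℝ) + Complex.I * ε)) (𝓝[>] 0)
      (𝓝 (Real.log r + Real.pi * Complex.I)) := by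
    have hlog := Complex.tendsto_log_nhdsWithin_im_nonneg_of_re_neg_of_im_zero
      (z := ((-r : ℝ) : ℂ)) (by simpa using hr) (by simp)
    simpa [Function.comp_def, abs_of_pos hr] using hlog.comp (tendsto_ofReal_add_I_mul (-r))
  have hlim := hright.sub hleft
  rw [sub_add_cancel_left] at hlim
  refine hlim.congr' ?_
  filter_upwards [self_mem_nhdsWithin] with ε hε
  exact (integral_inv_ofReal_add_I_mul (ne_of_gt hε) (-r) r).symm

lemma tendsto_div_ofReal_add_I_mul {k : ℝ} (hk : k ≠ 0) :
    Tendsto (fun ε : ℝ => (k : ℂ) / ((k : ℂ) + Complex.I * ε)) (𝓝 0) (𝓝 1) := by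
  have hk' : (k : ℂ) ≠ 0 := Complex.ofReal_ne_zero.2 hk
  have h : ContinuousAt (fun ε : ℝ => (k : ℂ) / ((k : ℂ) + Complex.I * ε)) 0 :=
    continuousAt_const.div (by fun_prop) (by simpa using hk')
  simpa [hk'] using h.tendsto

theorem tendsto_setIntegral_abs_gt {E : Type*} [NormedAddCommGroup E] [NormedSpace ℝ E]
    {f : ℝ → E} (hf : Integrable f) :
    Tendsto (fun ε : ℝ => ∫ k in {k : ℝ | ε < |k|}, f k) (𝓝 0) (𝓝 (∫ k, f k)) := by
  have hmeas (ε : ℝ) : MeasurableSet {k : ℝ | ε < |k|} :=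
    measurableSet_lt measurable_const measurable_abs
  simp_rw [← integral_indicator (hmeas _)]
  refine tendsto_integral_filter_of_dominated_convergence (fun k => ‖f k‖)
    (Eventually.of_forall fun ε => hf.aestronglyMeasurable.indicator (hmeas ε))
    (Eventually.of_forall fun ε => ae_of_all _ fun k => norm_indicator_le_norm_self _ _)
    hf.norm ?_
  filter_upwards [volume.ae_ne 0] with k hk
  refine tendsto_const_nhds.congr' ?_
  filter_upwards [gt_mem_nhds (abs_pos.2 hk)] with ε hε
  exact (indicator_of_mem (show k ∈ {k : ℝ | ε < |k|} from hε) f).symm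

theorem tendsto_integral_mul_div_ofReal_add_I_mul {f : ℝ → ℂ} (hf : Integrable f) :
    Tendsto (fun ε : ℝ => ∫ k, f k * (k / (k + Complex.I * ε))) (𝓝 0) (𝓝 (∫ k, f k)) := by
  refine tendsto_integral_filter_of_dominated_convergence (fun k => ‖f k‖)
    (Eventually.of_forall fun ε =>
      hf.aestronglyMeasurable.mul (by fun_prop : Measurable _).aestronglyMeasurable)
    (Eventually.of_forall fun ε => ae_of_all _ fun k => ?_) hf.norm ?_
  · rw [norm_mul]
    exact mul_le_of_le_one_right (norm_nonneg _) (norm_div_ofReal_add_I_mul_le_one k ε)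
  · filter_upwards [volume.ae_ne 0] with k hk
    simpa using (tendsto_div_ofReal_add_I_mul hk).const_mul (f k)

noncomputable def plemeljRemainder (g : ℝ → ℂ) : ℝ → ℂ :=
  (Icc (-1 : ℝ) 1).piecewise (dslope g 0) fun k => g k / k

lemma one_lt_abs_of_notMem_Icc {k : ℝ} (hk : k ∉ Icc (-1 : ℝ) 1) : 1 < |k| := by
  rwa [mem_Icc, ← abs_le, not_le] at hk

lemma ofReal_mul_plemeljRemainder_add_indicator (g : ℝ → ℂ) (k : ℝ) :
    k * plemeljRemainder g k + (Icc (-1 : ℝ) 1).indicator (fun _ => g 0) k = g k := by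
  by_cases hk : k ∈ Icc (-1 : ℝ) 1
  · have h := sub_smul_dslope g 0 k
    rw [sub_zero, Complex.real_smul] at h
    simp [plemeljRemainder, hk, h]
  · have hk0 : (k : ℂ) ≠ 0 :=
      Complex.ofReal_ne_zero.2 (by rintro rfl; exact hk ⟨by norm_num, by norm_num⟩)
    simp [plemeljRemainder, hk, mul_div_cancel₀ _ hk0]

lemma integrable_plemeljRemainder {g : ℝ → ℂ} (hg : Continuous g)
    (hg0 : DifferentiableAt ℝ g 0) (hgi : Integrable g) : Integrable (plemeljRemainder g) := by
  refine Integrable.piecewise measurableSet_Icc ?_ ?_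
  · exact ((continuousOn_dslope (Icc_mem_nhds (by norm_num) (by norm_num))).2
      ⟨hg.continuousOn, hg0⟩).integrableOn_Icc
  · refine Integrable.mono hgi.integrableOn
      (hg.measurable.div Complex.measurable_ofReal).aestronglyMeasurable ?_
    refine ae_restrict_of_forall_mem measurableSet_Icc.compl fun k hk => ?_
    rw [norm_div, Complex.norm_real, Real.norm_eq_abs]
    exact div_le_self (norm_nonneg _) (one_lt_abs_of_notMem_Icc hk).le

lemma setIntegral_abs_gt_div_ofReal_eq {g : ℝ → ℂ} (hψ : Integrable (plemeljRemainder g))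
    {ε : ℝ} (hε : 0 < ε) :
    ∫ k in {k : ℝ | ε < |k|}, g k / k = ∫ k in {k : ℝ | ε < |k|}, plemeljRemainder g k := by
  set S := {k : ℝ | ε < |k|}
  have hS : MeasurableSet S := measurableSet_lt measurable_const measurable_abs
  have hsplit : EqOn (fun k : ℝ => g k / k)
      (fun k => plemeljRemainder g k + g 0 * (Icc (-1 : ℝ) 1).indicator (fun k => (k : ℂ)⁻¹) k)
      S := by
    intro k hk
    have hk0 : (k : ℂ) ≠ 0 := Complex.ofReal_ne_zero.2 (abs_pos.1 (hε.trans hk))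
    dsimp only
    rw [← ofReal_mul_plemeljRemainder_add_indicator g k]
    by_cases hI : k ∈ Icc (-1 : ℝ) 1 <;> simp [hI] <;> field_simp
  have hodd : ∫ k in S, (Icc (-1 : ℝ) 1).indicator (fun k => (k : ℂ)⁻¹) k = 0 := by
    rw [← integral_indicator hS]
    refine integral_eq_zero_of_odd fun k => ?_
    simp only [indicator_apply, S, mem_ofPred_eq, mem_Icc, ← abs_le, abs_neg]
    split_ifs <;> simp
  have hint : IntegrableOn ((Icc (-1 : ℝ) 1).indicator (fun k => (k : ℂ)⁻¹)) S := by
    rw [integrableOn_indicator_iff measurableSet_Icc]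
    refine Measure.integrableOn_of_bounded (M := ε⁻¹) ?_
      (by fun_prop : Measurable _).aestronglyMeasurable ?_
    · exact (measure_mono inter_subset_left).trans_lt measure_Icc_lt_top |>.ne
    · refine ae_restrict_of_forall_mem (measurableSet_Icc.inter hS) fun k hk => ?_
      rw [norm_inv, Complex.norm_real, Real.norm_eq_abs]
      exact inv_anti₀ hε hk.2.le
  rw [setIntegral_congr_fun hS hsplit, integral_add hψ.integrableOn (hint.const_mul _),
    integral_const_mul, hodd, mul_zero, add_zero]

lemma integral_div_ofReal_add_I_mul_eq {g : ℝ → ℂ} (hψ : Integrable (plemeljRemainder g))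
    {ε : ℝ} (hε : ε ≠ 0) :
    ∫ k : ℝ, g k / (k + Complex.I * ε)
      = (∫ k : ℝ, plemeljRemainder g k * (k / (k + Complex.I * ε)))
        + g 0 * ∫ k in -1..1, ((k : ℂ) + Complex.I * ε)⁻¹ := by
  have hne (k : ℝ) := ofReal_add_I_mul_ne_zero k hε
  have hsplit (k : ℝ) : g k / (k + Complex.I * ε)
      = plemeljRemainder g k * (k / (k + Complex.I * ε))
        + (Icc (-1 : ℝ) 1).indicator (fun k => g 0 * ((k : ℂ) + Complex.I * ε)⁻¹) k := by
    rw [← ofReal_mul_plemeljRemainder_add_indicator g k]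
    by_cases hI : k ∈ Icc (-1 : ℝ) 1 <;> simp [hI] <;> field_simp [hne k]
  have hcont : Continuous fun k : ℝ => ((k : ℂ) + Complex.I * ε)⁻¹ :=
    Continuous.inv₀ (by fun_prop) hne
  have hmain : Integrable fun k : ℝ => plemeljRemainder g k * (k / (k + Complex.I * ε)) :=
    hψ.mul_bdd (by fun_prop : Measurable _).aestronglyMeasurable
      (ae_of_all _ fun k => norm_div_ofReal_add_I_mul_le_one k ε)
  have hlocal : Integrable ((Icc (-1 : ℝ) 1).indicator
      fun k => g 0 * ((k : ℂ) + Complex.I * ε)⁻¹) :=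
    ((hcont.const_mul _).continuousOn.integrableOn_Icc).integrable_indicator measurableSet_Icc
  simp_rw [hsplit]
  rw [integral_add hmain hlocal, integral_indicator measurableSet_Icc, integral_const_mul,
    integral_Icc_eq_integral_Ioc, ← intervalIntegral.integral_of_le (by norm_num)]

/-- Sokhotski–Plemelj formula: for every Schwartz function `g`, the principal
value `P = lim_{ε→0⁺} ∫_{|k|>ε} g(k)/k dk` exists and
`lim_{ε→0⁺} ∫ g(k)/(k+iε) dk = −iπ g(0) + P`. -/
theorem stmt11 (g : SchwartzMap ℝ ℂ) :
    ∃ P : ℂ,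
      Tendsto (fun ε : ℝ => ∫ k in {k : ℝ | ε < |k|}, g k / k)
        (nhdsWithin 0 (Set.Ioi 0)) (nhds P) ∧
      Tendsto (fun ε : ℝ => ∫ k : ℝ, g k / (k + Complex.I * ε))
        (nhdsWithin 0 (Set.Ioi 0))
        (nhds (-(Complex.I * Real.pi * g 0) + P)) := by
  have hψ := integrable_plemeljRemainder g.continuous g.differentiableAt g.integrable
  refine ⟨∫ k, plemeljRemainder g k, ?_, ?_⟩
  · refine (tendsto_setIntegral_abs_gt hψ).mono_left nhdsWithin_le_nhds |>.congr' ?_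
    filter_upwards [self_mem_nhdsWithin] with ε hε
    exact (setIntegral_abs_gt_div_ofReal_eq hψ hε).symm
  · have hlim := ((tendsto_integral_mul_div_ofReal_add_I_mul hψ).mono_left nhdsWithin_le_nhds).add
      ((tendsto_integral_inv_ofReal_add_I_mul one_pos).const_mul (g 0))
    rw [show (∫ k, plemeljRemainder g k) + g 0 * -(Real.pi * Complex.I)
      = -(Complex.I * Real.pi * g 0) + ∫ k, plemeljRemainder g k by ring] at hlim
    refine hlim.congr' ?_
    filter_upwards [self_mem_nhdsWithin] with ε hε
    exact (integral_div_ofReal_add_I_mul_eq hψ (ne_of_gt hε)).symm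
end

section
/- Reduction of the two-photon S⁰ to product form for a unique ground state: as distributions in (p₁,p₂,k₁,k₂), (1/2) t(k₁)t(k₂) δ(p₁+p₂−k₁−k₂) [δ(p₁−k₁)+δ(p₁−k₂)+δ(p₂−k₁)+δ(p₂−k₂) + P(1/(p₁−k₁)) + P(1/(p₁−k₂)) + P(1/(p₂−k₁)) + P(1/(p₂−k₂))] = t(k₁)t(k₂)[δ(p₁−k₁)δ(p₂−k₂) + δ(p₁−k₂)δ(p₂−k₁)]; in particular the principal-value terms cancel on the energy shell p₁+p₂ = k₁+k₂. -/
open Filter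

lemma pv_cancel (G : SchwartzMap ℝ ℂ) (ε k₁ k₂ k k' : ℝ) (h : k₁ + k₂ - k = k') :
    (∫ p in {p : ℝ | ε < |(k₁ + k₂ - p) - k|}, G p / ((k₁ + k₂ - p) - k))
      = - ∫ p in {p : ℝ | ε < |p - k'|}, G p / (p - k') := by
  subst h
  have hs : {p : ℝ | ε < |(k₁ + k₂ - p) - k|} = {p : ℝ | ε < |p - (k₁ + k₂ - k)|} := by
    ext p
    rw [Set.mem_setOf_eq, Set.mem_setOf_eq,
      show (k₁ + k₂ - p) - k = -(p - (k₁ + k₂ - k)) by ring, abs_neg]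
  have hf : (fun p : ℝ => G p / (((k₁ : ℂ) + k₂ - p) - k))
      = fun p : ℝ => -(G p / ((p : ℂ) - ((k₁ : ℂ) + k₂ - k))) := by
    funext p
    rw [show ((p : ℂ) - ((k₁ : ℂ) + k₂ - k)) = -(((k₁ : ℂ) + k₂ - p) - k) by ring,
      div_neg, neg_neg]
  rw [hs, hf, MeasureTheory.integral_neg]
  push_cast
  rfl

/-- Reduction of the two-photon `S⁰` to product form for a unique ground state:
pairing against a test function `G` of `p₁` along the energy shell
`p₂ = k₁ + k₂ − p₁`, the combination of the four delta terms and the four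
principal-value terms equals the product form `t(k₁)t(k₂)(G(k₁)+G(k₂))`:
the principal-value contributions cancel pairwise on the energy shell. -/
theorem stmt12 (t : ℝ → ℂ) (k₁ k₂ : ℝ) (G : SchwartzMap ℝ ℂ) :
    Tendsto
      (fun ε : ℝ =>
        (1 / 2 : ℂ) * t k₁ * t k₂ *
          ((G k₁ + G k₂ + G k₂ + G k₁) +
            (∫ p in {p : ℝ | ε < |p - k₁|}, G p / (p - k₁)) +
            (∫ p in {p : ℝ | ε < |p - k₂|}, G p / (p - k₂)) +
            (∫ p in {p : ℝ | ε < |(k₁ + k₂ - p) - k₁|}, G p / ((k₁ + k₂ - p) - k₁)) +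
            (∫ p in {p : ℝ | ε < |(k₁ + k₂ - p) - k₂|}, G p / ((k₁ + k₂ - p) - k₂))))
      (nhdsWithin 0 (Set.Ioi 0))
      (nhds (t k₁ * t k₂ * (G k₁ + G k₂))) := by
  have key : ∀ ε : ℝ,
        (1 / 2 : ℂ) * t k₁ * t k₂ *
          ((G k₁ + G k₂ + G k₂ + G k₁) +
            (∫ p in {p : ℝ | ε < |p - k₁|}, G p / (p - k₁)) +
            (∫ p in {p : ℝ | ε < |p - k₂|}, G p / (p - k₂)) +
            (∫ p in {p : ℝ | ε < |(k₁ + k₂ - p) - k₁|}, G p / ((k₁ + k₂ - p) - k₁)) +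
            (∫ p in {p : ℝ | ε < |(k₁ + k₂ - p) - k₂|}, G p / ((k₁ + k₂ - p) - k₂)))
      = t k₁ * t k₂ * (G k₁ + G k₂) := by
    intro ε
    rw [pv_cancel G ε k₁ k₂ k₁ k₂ (by ring), pv_cancel G ε k₁ k₂ k₂ k₁ (by ring)]
    ring
  simp only [key]
  exact tendsto_const_nhds
end
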